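/- arXiv:1607.03651 — 2 statements merged into one kernel-verified Lean document; each statement's English description precedes it below -/
import Mathlib

section
/- For all integers n ≥ k ≥ 0 and r ≥ 0, the partial r-Bell polynomial B^r_{n+r,k+r} ∈ R equals the sum, over all bicolored set partitions π ∈ S^r_{n+r,k+r}, of the monomial ∏_{blocks B of π colored 1} a_{|B|} · ∏_{blocks B of π colored 2} b_{|B|}. -/
noncomputable section

/-- `R = ℚ[a_1,a_2,…;b_1,b_2,…]`, realized as the polynomial ring over `ℚ` with variables
`X (true, i) = a_i` and `X (false, i) = b_i`. -/
abbrev RR : Type := MvPolynomial (Bool × ℕ) ℚ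

/-- the variable `a_i` -/
def va (i : ℕ) : RR := MvPolynomial.X (true, i)
/-- the variable `b_i` -/
def vb (i : ℕ) : RR := MvPolynomial.X (false, i)

/-- the derivation `∂` of `R` with `∂ a_i = a_{i+1}` and `∂ b_i = b_{i+1}` -/
def del : RR → RR :=
  fun p => MvPolynomial.mkDerivation ℚ (fun s : Bool × ℕ => MvPolynomial.X (s.1, s.2 + 1)) p

/-- coefficientwise extension of a map on coefficients to `R[t]` (i.e. `∂` with `∂ t = 0`) -/
def polyLift {A : Type*} [Semiring A] (D : A → A) (p : Polynomial A) : Polynomial A :=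
  p.sum fun i c => Polynomial.C (D c) * Polynomial.X ^ i

/-- the map `E : R[t] → R[t]`, `E(p) = t·b_1·p + ∂(p)` -/
def EOp (p : Polynomial RR) : Polynomial RR :=
  Polynomial.C (vb 1) * Polynomial.X * p + polyLift del p

/-- the partial `r`-Bell polynomial `B^r_{n+r,k+r}`: the coefficient of `t^k` in `E^n(a_1^r)` -/
def rBell (n k r : ℕ) : RR := (EOp^[n] (Polynomial.C (va 1 ^ r))).coeff k

/-- `IsBSP N k r π` : `π` is a bicolored set partition of `{0,…,N-1}` (representing
`{1,…,N}`) into `k + r` pairwise disjoint nonempty blocks, each block carrying a color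
(`true` = color 1, `false` = color 2), such that the blocks colored 1 are exactly the
blocks containing one of the first `r` elements and the first `r` elements lie in `r`
distinct blocks (so exactly `r` blocks are colored 1 and `k` blocks are colored 2).
For `N = n + r` this is membership in `S^r_{n+r,k+r}`. -/
def IsBSP (N k r : ℕ) (π : Finset (Finset (Fin N) × Bool)) : Prop :=
  π.card = k + r ∧
  (∀ p ∈ π, p.1.Nonempty) ∧
  (∀ p ∈ π, ∀ q ∈ π, p ≠ q → Disjoint p.1 q.1) ∧
  (∀ x : Fin N, ∃ p ∈ π, x ∈ p.1) ∧
  (∀ p ∈ π, (p.2 = true ↔ ∃ i ∈ p.1, (i : ℕ) < r)) ∧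
  (∀ p ∈ π, ∀ i ∈ p.1, ∀ j ∈ p.1, (i : ℕ) < r → (j : ℕ) < r → i = j)

set_option synthInstance.maxSize 2000 in
instance (N k r : ℕ) : DecidablePred (IsBSP N k r) := fun π => by
  unfold IsBSP; infer_instance

open Finset

/-!
Both sides satisfy the same recursion in `N = n + r`. Writing `B_{n,k}` for the coefficient of
`t^k` in `E^n(a_1^r)`, one application of `E` gives `B_{n+1,k+1} = b_1 B_{n,k} + ∂ B_{n,k+1}` and
`B_{n+1,0} = ∂ B_{n,0}`. On the partition side, remove the largest element `N + 1 > r`: either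
it forms a singleton block, necessarily of colour 2, which contributes the factor `b_1`, or it
lies in a larger block `B`, and removing it replaces the factor `x_{|B|}` by `x_{|B|-1}`; summing
over the block that receives the new element is exactly the Leibniz rule for `∂`. For `n = 0`
the only admissible partition is the one into the singletons `{1}, …, {r}`, of weight `a_1^r`.
-/

theorem Derivation.map_prod_eq_sum_smul {R A M : Type*} [CommSemiring R] [CommSemiring A]
    [Algebra R A] [AddCommMonoid M] [Module A M] [Module R M] (D : Derivation R A M)
    {ι : Type*} [DecidableEq ι] (s : Finset ι) (f : ι → A) :
    D (∏ i ∈ s, f i) = ∑ i ∈ s, (∏ j ∈ s.erase i, f j) • D (f i) := by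
  induction s using Finset.induction_on with
  | empty => simp
  | insert a s ha ih =>
    rw [prod_insert ha, D.leibniz, ih, sum_insert ha, erase_insert ha, smul_sum, add_comm]
    congr 1
    refine sum_congr rfl fun i hi => ?_
    rw [erase_insert_of_ne (ne_of_mem_of_not_mem hi ha).symm, prod_insert (by simp [ha]),
      smul_smul]

def delDerivation : Derivation ℚ RR RR :=
  MvPolynomial.mkDerivation ℚ fun s => MvPolynomial.X (s.1, s.2 + 1)

theorem del_eq_delDerivation : del = delDerivation := rfl

@[simp] theorem del_va (i : ℕ) : del (va i) = va (i + 1) := MvPolynomial.mkDerivation_X ℚ _ _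

@[simp] theorem del_vb (i : ℕ) : del (vb i) = vb (i + 1) := MvPolynomial.mkDerivation_X ℚ _ _

theorem del_prod {ι : Type*} [DecidableEq ι] (s : Finset ι) (f : ι → RR) :
    del (∏ i ∈ s, f i) = ∑ i ∈ s, del (f i) * ∏ j ∈ s.erase i, f j := by
  simp [del_eq_delDerivation, Derivation.map_prod_eq_sum_smul, mul_comm]

theorem del_sum {ι : Type*} (s : Finset ι) (f : ι → RR) :
    del (∑ i ∈ s, f i) = ∑ i ∈ s, del (f i) :=
  map_sum delDerivation f s

theorem coeff_polyLift_del (p : Polynomial RR) (k : ℕ) :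
    (polyLift del p).coeff k = del (p.coeff k) := by
  rw [polyLift, Polynomial.sum_def, Polynomial.finsetSum_coeff]
  simp only [Polynomial.coeff_C_mul_X_pow]
  rw [sum_ite_eq]
  split_ifs with h
  · rfl
  · rw [Polynomial.notMem_support_iff.mp h, del_eq_delDerivation, map_zero]

theorem coeff_EOp_zero (p : Polynomial RR) : (EOp p).coeff 0 = del (p.coeff 0) := by
  simp [EOp, coeff_polyLift_del, Polynomial.mul_coeff_zero]

theorem coeff_EOp_succ (p : Polynomial RR) (k : ℕ) :
    (EOp p).coeff (k + 1) = vb 1 * p.coeff k + del (p.coeff (k + 1)) := by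
  rw [EOp, Polynomial.coeff_add, coeff_polyLift_del, mul_assoc, Polynomial.coeff_C_mul,
    Polynomial.coeff_X_mul]

theorem rBell_zero (k r : ℕ) : rBell 0 k r = if k = 0 then va 1 ^ r else 0 :=
  Polynomial.coeff_C

theorem rBell_succ_zero (n r : ℕ) : rBell (n + 1) 0 r = del (rBell n 0 r) := by
  rw [rBell, Function.iterate_succ_apply', coeff_EOp_zero, rBell]

theorem rBell_succ_succ (n k r : ℕ) :
    rBell (n + 1) (k + 1) r = vb 1 * rBell n k r + del (rBell n (k + 1) r) := by
  rw [rBell, Function.iterate_succ_apply', coeff_EOp_succ, rBell, rBell]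

abbrev Block (M : ℕ) : Type := Finset (Fin M) × Bool

def blockWeight {M : ℕ} (p : Block M) : RR := if p.2 then va p.1.card else vb p.1.card

section Blocks

variable {N : ℕ}

def liftBlock (p : Block N) : Block (N + 1) := (p.1.map Fin.castSuccEmb, p.2)

def extendBlock (p : Block N) : Block (N + 1) :=
  (insert (Fin.last N) (p.1.map Fin.castSuccEmb), p.2)

def restrictBlock (q : Block (N + 1)) : Block N :=
  (q.1.preimage Fin.castSucc (Fin.castSucc_injective N).injOn, q.2)

@[simp] theorem castSucc_mem_liftBlock {p : Block N} {x : Fin N} :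
    x.castSucc ∈ (liftBlock p).1 ↔ x ∈ p.1 := by
  simp [liftBlock]

@[simp] theorem last_notMem_liftBlock (p : Block N) : Fin.last N ∉ (liftBlock p).1 := by
  simp [liftBlock]

@[simp] theorem castSucc_mem_extendBlock {p : Block N} {x : Fin N} :
    x.castSucc ∈ (extendBlock p).1 ↔ x ∈ p.1 := by
  simp [extendBlock]

@[simp] theorem last_mem_extendBlock (p : Block N) : Fin.last N ∈ (extendBlock p).1 :=
  mem_insert_self _ _

@[simp] theorem liftBlock_snd (p : Block N) : (liftBlock p).2 = p.2 := rfl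

@[simp] theorem extendBlock_snd (p : Block N) : (extendBlock p).2 = p.2 := rfl

theorem restrictBlock_liftBlock (p : Block N) : restrictBlock (liftBlock p) = p := by
  ext <;> simp [restrictBlock]

theorem restrictBlock_extendBlock (p : Block N) : restrictBlock (extendBlock p) = p := by
  ext <;> simp [restrictBlock]

theorem liftBlock_injective : Function.Injective (liftBlock (N := N)) :=
  Function.LeftInverse.injective restrictBlock_liftBlock

theorem extendBlock_injective : Function.Injective (extendBlock (N := N)) :=
  Function.LeftInverse.injective restrictBlock_extendBlock

@[simp] theorem extendBlock_ne_liftBlock (p q : Block N) : extendBlock p ≠ liftBlock q :=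
  fun h => last_notMem_liftBlock q (h ▸ last_mem_extendBlock p)

theorem liftBlock_restrictBlock {q : Block (N + 1)} (hq : Fin.last N ∉ q.1) :
    liftBlock (restrictBlock q) = q := by
  ext y
  · induction y using Fin.lastCases <;> simp [restrictBlock, liftBlock, hq]
  · rfl

theorem extendBlock_restrictBlock {q : Block (N + 1)} (hq : Fin.last N ∈ q.1) :
    extendBlock (restrictBlock q) = q := by
  ext y
  · induction y using Fin.lastCases <;> simp [restrictBlock, extendBlock, hq]
  · rfl

@[simp] theorem blockWeight_liftBlock (p : Block N) :
    blockWeight (liftBlock p) = blockWeight p := by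
  simp [blockWeight, liftBlock]

theorem blockWeight_extendBlock (p : Block N) :
    blockWeight (extendBlock p) = del (blockWeight p) := by
  rcases p with ⟨B, _ | _⟩ <;> simp [blockWeight, extendBlock]

end Blocks

def IsColoredCover {M : ℕ} (r : ℕ) (π : Finset (Block M)) : Prop :=
  (∀ p ∈ π, ∀ q ∈ π, p ≠ q → Disjoint p.1 q.1) ∧
  (∀ x : Fin M, ∃ p ∈ π, x ∈ p.1) ∧
  (∀ p ∈ π, (p.2 = true ↔ ∃ i ∈ p.1, (i : ℕ) < r)) ∧
  (∀ p ∈ π, ∀ i ∈ p.1, ∀ j ∈ p.1, (i : ℕ) < r → (j : ℕ) < r → i = j)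

theorem isBSP_iff {M m r : ℕ} {π : Finset (Block M)} :
    IsBSP M m r π ↔ π.card = m + r ∧ (∀ p ∈ π, p.1.Nonempty) ∧ IsColoredCover r π :=
  Iff.rfl

section AttachLast

variable {N r : ℕ}

/-- Every bicoloured partition of `Fin (N + 1)` is `attachLast p π` for exactly one pair: `p` is
the block of `Fin.last N` with that element removed (`p = (∅, false)` when it is a singleton),
and `π` consists of the other blocks. -/
def attachLast (p : Block N) (π : Finset (Block N)) : Finset (Block (N + 1)) :=
  insert (extendBlock p) (π.image liftBlock)

theorem extendBlock_notMem_image_liftBlock (p : Block N) (π : Finset (Block N)) :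
    extendBlock p ∉ π.image liftBlock := by
  simp [eq_comm]

theorem card_attachLast (p : Block N) (π : Finset (Block N)) :
    (attachLast p π).card = π.card + 1 := by
  rw [attachLast, card_insert_of_notMem (extendBlock_notMem_image_liftBlock p π),
    card_image_of_injective _ liftBlock_injective]

theorem prod_blockWeight_attachLast (p : Block N) (π : Finset (Block N)) :
    ∏ q ∈ attachLast p π, blockWeight q = del (blockWeight p) * ∏ q ∈ π, blockWeight q := by
  rw [attachLast, prod_insert (extendBlock_notMem_image_liftBlock p π),
    prod_image liftBlock_injective.injOn, blockWeight_extendBlock]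
  simp

theorem isColoredCover_attachLast_iff (hr : r ≤ N) {p : Block N} {π : Finset (Block N)}
    (hp : p ∉ π) : IsColoredCover r (attachLast p π) ↔ IsColoredCover r (insert p π) := by
  have hlast : ¬ N < r := by omega
  have hne : ∀ q ∈ π, q ≠ p := fun q hq h => hp (h ▸ hq)
  have hne' : ∀ q ∈ π, p ≠ q := fun q hq => (hne q hq).symm
  -- Each condition splits into its instances at `last`, which hold trivially since `last ≥ r` lies
  -- in the new block only, and its instances at `castSucc x`, which are those for `insert p π`.
  simp +contextual only [IsColoredCover, attachLast, forall_mem_insert, forall_mem_image,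
    exists_mem_insert, exists_mem_image, disjoint_left, Fin.forall_fin_succ', Fin.exists_fin_succ',
    castSucc_mem_liftBlock, castSucc_mem_extendBlock, last_mem_extendBlock, last_notMem_liftBlock,
    Fin.val_castSucc, Fin.val_last, hlast, liftBlock_snd, extendBlock_snd, ne_eq,
    liftBlock_injective.eq_iff, Fin.castSucc_inj, extendBlock_ne_liftBlock,
    (extendBlock_ne_liftBlock _ _).symm, hne, hne', not_true_eq_false, not_false_eq_true,
    false_implies, true_implies, implies_true, and_true, true_and, or_false, and_false, true_or]

theorem forall_nonempty_attachLast_iff {p : Block N} {π : Finset (Block N)} :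
    (∀ q ∈ attachLast p π, q.1.Nonempty) ↔ ∀ q ∈ π, q.1.Nonempty := by
  simp only [attachLast, forall_mem_insert, forall_mem_image, liftBlock, map_nonempty, extendBlock,
    insert_nonempty, true_and]

theorem notMem_of_isBSP_attachLast {m : ℕ} {p : Block N} {π : Finset (Block N)}
    (h : IsBSP (N + 1) m r (attachLast p π)) : p ∉ π := by
  intro hp
  obtain ⟨-, hne, hdisj, -⟩ := h
  have hlift : liftBlock p ∈ attachLast p π := mem_insert_of_mem (mem_image_of_mem _ hp)
  obtain ⟨x, hx⟩ := hne _ hlift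
  induction x using Fin.lastCases with
  | last => simp at hx
  | cast x =>
    refine disjoint_left.mp (hdisj _ (mem_insert_self _ _) _ hlift
      (extendBlock_ne_liftBlock p p)) ?_ hx
    simpa using hx

theorem isBSP_attachLast_iff (hr : r ≤ N) {m : ℕ} {p : Block N} {π : Finset (Block N)} :
    IsBSP (N + 1) m r (attachLast p π) ↔
      p ∉ π ∧ π.card + 1 = m + r ∧ (∀ q ∈ π, q.1.Nonempty) ∧ IsColoredCover r (insert p π) := by
  by_cases hp : p ∈ π
  · exact iff_of_false (fun h => notMem_of_isBSP_attachLast h hp) fun h => h.1 hp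
  · rw [isBSP_iff, card_attachLast, forall_nonempty_attachLast_iff,
      isColoredCover_attachLast_iff hr hp]
    exact (and_iff_right hp).symm

theorem extendBlock_mem_attachLast_iff {p p' : Block N} {π : Finset (Block N)} :
    extendBlock p' ∈ attachLast p π ↔ p' = p := by
  simp only [attachLast, mem_insert, extendBlock_injective.eq_iff,
    extendBlock_notMem_image_liftBlock, or_false]

theorem attachLast_injective :
    Function.Injective fun x : Block N × Finset (Block N) => attachLast x.1 x.2 := by
  rintro ⟨p, π⟩ ⟨p', π'⟩ h
  dsimp only at h
  obtain rfl : p = p' :=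
    extendBlock_mem_attachLast_iff.mp (h ▸ mem_insert_self _ _ : extendBlock p ∈ attachLast p' π')
  have himage (π : Finset (Block N)) :
      π.image liftBlock = (attachLast p π).erase (extendBlock p) :=
    (erase_insert (extendBlock_notMem_image_liftBlock p π)).symm
  exact Prod.ext rfl (image_injective liftBlock_injective (by rw [himage, himage, h]))

theorem exists_eq_attachLast {m : ℕ} {π : Finset (Block (N + 1))} (h : IsBSP (N + 1) m r π) :
    ∃ p π', π = attachLast p π' := by
  obtain ⟨-, -, hdisj, hcov, -⟩ := h
  obtain ⟨q, hq, hlast⟩ := hcov (Fin.last N)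
  refine ⟨restrictBlock q, (π.erase q).image restrictBlock, ?_⟩
  have hlift : ∀ a ∈ π.erase q, (liftBlock ∘ restrictBlock) a = a := fun a ha =>
    liftBlock_restrictBlock fun hl => (mem_erase.mp ha).1
      (by_contra fun hne => disjoint_left.mp (hdisj _ (mem_of_mem_erase ha) _ hq hne) hl hlast)
  rw [attachLast, extendBlock_restrictBlock hlast, image_image, image_congr hlift, image_id',
    insert_erase hq]

end AttachLast

theorem le_card_of_isColoredCover {M r : ℕ} (hr : r ≤ M) {π : Finset (Block M)}
    (h : IsColoredCover r π) : r ≤ π.card := by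
  have key := card_le_card_of_forall_subsingleton (fun (i : Fin r) (p : Block M) =>
      Fin.castLE hr i ∈ p.1) (s := univ) (t := π)
    (fun i _ => h.2.1 (Fin.castLE hr i))
    (fun p hp i hi j hj => Fin.castLE_injective hr <|
      h.2.2.2 p hp _ hi.2 _ hj.2 (by simp) (by simp))
  simpa using key

theorem isColoredCover_insert_empty_iff {M r : ℕ} {π : Finset (Block M)} :
    IsColoredCover r (insert (∅, false) π) ↔ IsColoredCover r π := by
  simp only [IsColoredCover, forall_mem_insert, exists_mem_insert, disjoint_empty_left,
    disjoint_empty_right, notMem_empty, false_or, false_and, exists_false, Bool.false_eq_true,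
    IsEmpty.forall_iff, implies_true, true_and, iff_self]

section Sums

variable {N r : ℕ}

def bspSum (M m r : ℕ) : RR := ∑ π ∈ univ.filter (IsBSP M m r), ∏ p ∈ π, blockWeight p

theorem isBSP_attachLast_empty_iff (hr : r ≤ N) {k : ℕ} {π : Finset (Block N)} :
    IsBSP (N + 1) (k + 1) r (attachLast (∅, false) π) ↔ IsBSP N k r π := by
  rw [isBSP_attachLast_iff hr, isColoredCover_insert_empty_iff, isBSP_iff]
  constructor
  · rintro ⟨-, hcard, hne, hcov⟩
    exact ⟨by omega, hne, hcov⟩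
  · rintro ⟨hcard, hne, hcov⟩
    exact ⟨fun h => (hne _ h).ne_empty rfl, by omega, hne, hcov⟩

theorem not_isBSP_zero_attachLast_empty (hr : r ≤ N) (π : Finset (Block N)) :
    ¬ IsBSP (N + 1) 0 r (attachLast (∅, false) π) := by
  rw [isBSP_attachLast_iff hr, isColoredCover_insert_empty_iff]
  rintro ⟨-, hcard, -, hcov⟩
  have := le_card_of_isColoredCover hr hcov
  omega

theorem isBSP_attachLast_erase_iff (hr : r ≤ N) {k : ℕ} {p : Block N} {π : Finset (Block N)}
    (hp : p ∈ π) (hpne : p.1.Nonempty) :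
    IsBSP (N + 1) k r (attachLast p (π.erase p)) ↔ IsBSP N k r π := by
  rw [isBSP_attachLast_iff hr, insert_erase hp, isBSP_iff, ← card_erase_add_one hp]
  constructor
  · rintro ⟨-, hcard, hne, hcov⟩
    refine ⟨hcard, fun q hq => ?_, hcov⟩
    by_cases hqp : q = p
    · exact hqp ▸ hpne
    · exact hne q (mem_erase.mpr ⟨hqp, hq⟩)
  · rintro ⟨hcard, hne, hcov⟩
    exact ⟨notMem_erase p π, hcard, fun q hq => hne q (mem_of_mem_erase hq), hcov⟩

theorem nonempty_of_isBSP_attachLast (hr : r ≤ N) {m : ℕ} {p : Block N} {π : Finset (Block N)}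
    (h : IsBSP (N + 1) m r (attachLast p π)) (hp : p ≠ (∅, false)) : p.1.Nonempty := by
  refine nonempty_iff_ne_empty.mpr fun hpe => hp (Prod.ext hpe ?_)
  obtain ⟨-, -, -, -, -, hcol, -⟩ := (isBSP_attachLast_iff hr).mp h
  simpa [hpe] using hcol p (mem_insert_self p π)

theorem filter_mem_extendBlock_empty_eq_image (hr : r ≤ N) (k : ℕ) :
    (univ.filter (IsBSP (N + 1) (k + 1) r)).filter (extendBlock (∅, false) ∈ ·) =
      (univ.filter (IsBSP N k r)).image (attachLast (∅, false)) := by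
  ext π
  simp only [mem_filter, mem_univ, true_and, mem_image]
  constructor
  · rintro ⟨h, hmem⟩
    obtain ⟨p, π', rfl⟩ := exists_eq_attachLast h
    obtain rfl := (extendBlock_mem_attachLast_iff.mp hmem).symm
    exact ⟨π', (isBSP_attachLast_empty_iff hr).mp h, rfl⟩
  · rintro ⟨π', h, rfl⟩
    exact ⟨(isBSP_attachLast_empty_iff hr).mpr h, extendBlock_mem_attachLast_iff.mpr rfl⟩

theorem filter_mem_extendBlock_empty_eq_empty (hr : r ≤ N) :
    (univ.filter (IsBSP (N + 1) 0 r)).filter (extendBlock (∅, false) ∈ ·) = ∅ := by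
  refine filter_false_of_mem fun π hπ hmem => ?_
  obtain ⟨p, π', rfl⟩ := exists_eq_attachLast (mem_filter.mp hπ).2
  obtain rfl := (extendBlock_mem_attachLast_iff.mp hmem).symm
  exact not_isBSP_zero_attachLast_empty hr π' (mem_filter.mp hπ).2

theorem filter_notMem_extendBlock_empty_eq_image (hr : r ≤ N) (k : ℕ) :
    (univ.filter (IsBSP (N + 1) k r)).filter (extendBlock (∅, false) ∉ ·) =
      ((univ.filter (IsBSP N k r)).sigma id).image fun x => attachLast x.2 (x.1.erase x.2) := by
  ext π
  simp only [mem_filter, mem_univ, true_and, mem_image, mem_sigma, id, Sigma.exists]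
  constructor
  · rintro ⟨h, hmem⟩
    obtain ⟨p, π', rfl⟩ := exists_eq_attachLast h
    have hp : p ∉ π' := notMem_of_isBSP_attachLast h
    have hpne := nonempty_of_isBSP_attachLast hr h fun hp => hmem (by
      rw [extendBlock_mem_attachLast_iff, hp])
    refine ⟨insert p π', p, ⟨?_, mem_insert_self p π'⟩, by rw [erase_insert hp]⟩
    rwa [← isBSP_attachLast_erase_iff hr (mem_insert_self p π') hpne, erase_insert hp]
  · rintro ⟨π', p, ⟨h, hp⟩, rfl⟩
    have hpne := h.2.1 p hp
    refine ⟨(isBSP_attachLast_erase_iff hr hp hpne).mpr h, fun hmem => ?_⟩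
    rw [← extendBlock_mem_attachLast_iff.mp hmem] at hpne
    exact not_nonempty_empty hpne

theorem sum_filter_mem_extendBlock_empty (hr : r ≤ N) (k : ℕ) :
    ∑ π ∈ (univ.filter (IsBSP (N + 1) (k + 1) r)).filter (extendBlock (∅, false) ∈ ·),
      ∏ q ∈ π, blockWeight q = vb 1 * bspSum N k r := by
  have hinj : Function.Injective (attachLast (N := N) (∅, false)) := fun π π' h =>
    congrArg Prod.snd (@attachLast_injective N (_, π) (_, π') h)
  rw [filter_mem_extendBlock_empty_eq_image hr, sum_image hinj.injOn, bspSum, mul_sum]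
  refine sum_congr rfl fun π _ => ?_
  rw [prod_blockWeight_attachLast]
  simp [blockWeight]

theorem sum_filter_notMem_extendBlock_empty (hr : r ≤ N) (k : ℕ) :
    ∑ π ∈ (univ.filter (IsBSP (N + 1) k r)).filter (extendBlock (∅, false) ∉ ·),
      ∏ q ∈ π, blockWeight q = del (bspSum N k r) := by
  have hinj : Set.InjOn (fun x : (_ : Finset (Block N)) × Block N => attachLast x.2 (x.1.erase x.2))
      ((univ.filter (IsBSP N k r)).sigma id) := by
    rintro ⟨π, p⟩ hp ⟨π', p'⟩ hp' h
    simp only [coe_sigma, Set.mem_sigma_iff, id] at hp hp'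
    obtain ⟨rfl, he⟩ := Prod.mk.inj (@attachLast_injective N (p, π.erase p) (p', π'.erase p') h)
    rw [← insert_erase hp.2, he, insert_erase hp'.2]
  rw [filter_notMem_extendBlock_empty_eq_image hr, sum_image hinj, sum_sigma, bspSum, del_sum]
  refine sum_congr rfl fun π _ => ?_
  simp only [prod_blockWeight_attachLast, del_prod, id]

theorem bspSum_succ_succ (hr : r ≤ N) (k : ℕ) :
    bspSum (N + 1) (k + 1) r = vb 1 * bspSum N k r + del (bspSum N (k + 1) r) := by
  rw [bspSum, ← sum_filter_add_sum_filter_not _ (extendBlock (∅, false) ∈ ·),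
    sum_filter_mem_extendBlock_empty hr, sum_filter_notMem_extendBlock_empty hr]

theorem bspSum_succ_zero (hr : r ≤ N) : bspSum (N + 1) 0 r = del (bspSum N 0 r) := by
  rw [bspSum, ← sum_filter_add_sum_filter_not _ (extendBlock (∅, false) ∈ ·),
    filter_mem_extendBlock_empty_eq_empty hr, sum_empty, zero_add,
    sum_filter_notMem_extendBlock_empty hr]

end Sums

theorem isBSP_self_iff {m r : ℕ} {π : Finset (Block r)} :
    IsBSP r m r π ↔ m = 0 ∧ π = univ.image fun x => ({x}, true) := by
  have hinj : Function.Injective fun x : Fin r => (({x}, true) : Block r) :=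
    fun x y h => singleton_injective (congrArg Prod.fst h)
  constructor
  · rintro ⟨hcard, hne, -, hcov, hcol, huniq⟩
    have hblock : ∀ p ∈ π, ∀ x ∈ p.1, p = ({x}, true) := fun p hp x hx =>
      Prod.ext (eq_singleton_iff_unique_mem.mpr
          ⟨hx, fun y hy => huniq p hp y hy x hx y.isLt x.isLt⟩)
        ((hcol p hp).mpr ⟨x, hx, x.isLt⟩)
    have hπ : π = univ.image fun x => ({x}, true) := by
      ext p
      simp only [mem_image, mem_univ, true_and]
      constructor
      · intro hp
        obtain ⟨x, hx⟩ := hne p hp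
        exact ⟨x, (hblock p hp x hx).symm⟩
      · rintro ⟨x, rfl⟩
        obtain ⟨p, hp, hx⟩ := hcov x
        exact hblock p hp x hx ▸ hp
    rw [hπ, card_image_of_injective _ hinj, card_univ, Fintype.card_fin] at hcard
    exact ⟨by omega, hπ⟩
  · rintro ⟨rfl, rfl⟩
    refine ⟨by simp [card_image_of_injective _ hinj], ?_, ?_, ?_, ?_, ?_⟩ <;> simp
    exact fun _ _ => Ne.symm

theorem bspSum_self (k r : ℕ) : bspSum r k r = if k = 0 then va 1 ^ r else 0 := by
  split_ifs with hk
  · subst hk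
    have hset : univ.filter (IsBSP r 0 r) = {univ.image fun x => ({x}, true)} := by
      ext π
      simp [isBSP_self_iff]
    rw [bspSum, hset, sum_singleton,
      prod_image fun x _ y _ h => singleton_injective (congrArg Prod.fst h)]
    simp [blockWeight]
  · exact sum_eq_zero fun π hπ => absurd (isBSP_self_iff.mp (mem_filter.mp hπ).2).1 hk

theorem stmt2_general (n k r : ℕ) :
    rBell n k r =
      ∑ π ∈ Finset.univ.filter
          (fun π : Finset (Finset (Fin (n + r)) × Bool) => IsBSP (n + r) k r π),
        ∏ p ∈ π, (if p.2 then va p.1.card else vb p.1.card) := by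
  change rBell n k r = bspSum (n + r) k r
  induction n generalizing k with
  | zero => rw [rBell_zero, zero_add, bspSum_self]
  | succ n ih =>
    have hr : r ≤ n + r := Nat.le_add_left r n
    rw [Nat.add_right_comm]
    cases k with
    | zero => rw [rBell_succ_zero, bspSum_succ_zero hr, ih]
    | succ k => rw [rBell_succ_succ, bspSum_succ_succ hr, ih, ih]

/-- For `n ≥ k ≥ 0` and `r ≥ 0`, the partial `r`-Bell polynomial
`B^r_{n+r,k+r} ∈ R` is the sum, over all bicolored set partitions `π ∈ S^r_{n+r,k+r}`, of
`∏_{blocks B colored 1} a_{|B|} · ∏_{blocks B colored 2} b_{|B|}`. -/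
theorem stmt2 (n k r : ℕ) (hkn : k ≤ n) :
    rBell n k r =
      ∑ π ∈ Finset.univ.filter
          (fun π : Finset (Finset (Fin (n + r)) × Bool) => IsBSP (n + r) k r π),
        ∏ p ∈ π, (if p.2 then va p.1.card else vb p.1.card) :=
  stmt2_general n k r
end
end

section
/- Let A be an associative unital ℚ-algebra, D : A → A a derivation, b ∈ A, and set b_i := D^{i−1}(b) for i ≥ 1. For f ∈ A let R_f ∈ End(A) denote right multiplication p ↦ p·f, and for X, Y ∈ End(A) let ad_X(Y) := X∘Y − Y∘X. Then for all integers n ≥ 2 and 1 ≤ k ≤ n−1: ad_D^{n−k−1}( ad_{R_b}^{k}(D) ) = (−1)^k · R_c, where c = ∑ (n−k−1)!/((i_1−1)!⋯(i_{k−1}−1)!·(i_k−2)!) · [b_{i_1},[b_{i_2},[…,[b_{i_{k−1}}, b_{i_k}]…]]], the sum being over all k-tuples (i_1,…,i_k) of integers with i_1+⋯+i_k = n, i_j ≥ 1 for 1 ≤ j ≤ k−1, and i_k ≥ 2, and where [u,v] = uv − vu denotes the commutator in A (for k = 1 the nested bracket is just b_{i_1} = b_n). -/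
/-- The right-nested commutator `[u_1,[u_2,[…,[u_{k-1},u_k]…]]]` of a list of elements
(for a singleton list it is the element itself). -/
def nestedComm {A : Type*} [Ring A] : List A → A
  | [] => 0
  | [u] => u
  | u :: v :: rest => u * nestedComm (v :: rest) - nestedComm (v :: rest) * u

/-!
Since `ad_{R_b}(D) = -R_{D b}` and `ad_{R_b}(R_f) = -R_{[b, f]}`, one gets
`ad_{R_b}^k(D) = (-1)^k R_c` with `c = [b, [b, …, [b, D b]…]]`; and since `ad_D(R_f) = R_{D f}`,
what remains is to expand `D^{n-k-1} c`. By the Leibniz rule, `D` maps the nested commutator of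
`D^{u_1} b, …, D^{u_k} b` to the sum of the `k` nested commutators in which one exponent `u_j` is
raised by one: on exponent tuples `D` acts as multiplication by `X_1 + ⋯ + X_k`, so the
multinomial theorem gives the coefficients `(n-k-1)! / ∏ v_j!`.
-/

open Finset Function

lemma nestedComm_cons {A : Type*} [Ring A] (a : A) {l : List A} (hl : l ≠ []) :
    nestedComm (a :: l) = a * nestedComm l - nestedComm l * a := by
  obtain ⟨v, t, rfl⟩ := List.exists_cons_of_ne_nil hl
  rfl

section Leibniz

variable {A : Type*} [Ring A] (D : A →+ A) (hD : ∀ x y, D (x * y) = D x * y + x * D y)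
include hD

lemma map_mul_sub_mul_of_leibniz (x y : A) :
    D (x * y - y * x) = (D x * y - y * D x) + (x * D y - D y * x) := by
  rw [map_sub, hD, hD]; abel

lemma map_nestedComm_ofFn : ∀ {k : ℕ} (x : Fin k → A),
    D (nestedComm (List.ofFn x)) = ∑ j, nestedComm (List.ofFn (update x j (D (x j))))
  | 0, _ => by simp [nestedComm]
  | 1, _ => by simp [nestedComm]
  | k + 2, x => by
    have htail : ∀ (i : Fin (k + 1)) (a : A),
        (fun l : Fin (k + 1) => update x i.succ a l.succ) = update (fun l => x l.succ) i a :=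
      fun i a => update_comp_eq_of_injective x (Fin.succ_injective _) i a
    rw [Fin.sum_univ_succ]
    simp only [List.ofFn_succ (n := k + 1), update_self, htail,
      update_of_ne (Fin.succ_ne_zero _), update_of_ne (Fin.succ_ne_zero _).symm,
      nestedComm_cons _ (mt List.ofFn_eq_nil_iff.1 (Nat.succ_ne_zero k))]
    rw [map_mul_sub_mul_of_leibniz D hD, map_nestedComm_ofFn, mul_sum, sum_mul, ← sum_sub_distrib]

lemma map_nestedComm_ofFn_iterate (b : A) {k : ℕ} (u : Fin k → ℕ) :
    D (nestedComm (List.ofFn fun j => D^[u j] b)) =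
      ∑ j, nestedComm (List.ofFn fun i => D^[(u + Pi.single j 1 : Fin k → ℕ) i] b) := by
  rw [map_nestedComm_ofFn D hD]
  refine sum_congr rfl fun j _ => congrArg (nestedComm ∘ List.ofFn) (funext fun i => ?_)
  rcases eq_or_ne i j with rfl | hij
  · simp [iterate_succ_apply']
  · simp [hij]

end Leibniz

section Multinomial

open AddMonoidAlgebra

variable {V : Type*} [AddCommMonoid V] {k : ℕ}

/-- `F` extended additively to formal `ℕ`-combinations of exponent tuples. -/
noncomputable def addExtension (F : (Fin k → ℕ) → V) : AddMonoidAlgebra ℕ (Fin k → ℕ) →+ V :=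
  (Finsupp.liftAddHom fun v => multiplesHom V (F v)).comp
    AddMonoidAlgebra.coeffAddEquiv.toAddMonoidHom

@[simp] lemma addExtension_single (F : (Fin k → ℕ) → V) (v : Fin k → ℕ) (c : ℕ) :
    addExtension F (AddMonoidAlgebra.single v c) = c • F v := by
  simp [addExtension]

variable (D : V →+ V) (F : (Fin k → ℕ) → V) (hF : ∀ u, D (F u) = ∑ j, F (u + Pi.single j 1))
include hF

lemma iterate_map_addExtension (m : ℕ) (p : AddMonoidAlgebra ℕ (Fin k → ℕ)) :
    D^[m] (addExtension F p) = addExtension F ((∑ j, single (Pi.single j 1) 1) ^ m * p) := by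
  have hmul : ∀ q, D (addExtension F q) = addExtension F ((∑ j, single (Pi.single j 1) 1) * q) := by
    intro q
    induction q using AddMonoidAlgebra.induction_linear with
    | zero => simp
    | add q r hq hr => simp [mul_add, hq, hr]
    | single v c => simp [sum_mul, single_mul_single, hF, add_comm, smul_sum]
  induction m generalizing p with
  | zero => simp
  | succ m ih => rw [iterate_succ_apply, hmul, ih, pow_succ, mul_assoc]

theorem iterate_apply_eq_sum_multinomial (m : ℕ) (u : Fin k → ℕ) :
    D^[m] (F u) = ∑ v ∈ piAntidiag univ m, Nat.multinomial univ v • F (u + v) := by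
  have hpow : (∑ j, single (Pi.single j 1) 1 : AddMonoidAlgebra ℕ (Fin k → ℕ)) ^ m =
      ∑ v ∈ piAntidiag univ m, single v (Nat.multinomial univ v) := by
    rw [sum_pow_eq_sum_piAntidiag]
    refine sum_congr rfl fun v _ => ?_
    simp only [single_pow, one_pow, prod_single, prod_const_one, ← Pi.single_smul', smul_eq_mul,
      mul_one, univ_sum_single, natCast_def, single_mul_single, zero_add, Nat.cast_id]
  have := iterate_map_addExtension D F hF m (single u 1)
  rw [addExtension_single, one_smul, hpow, sum_mul] at this
  simp [this, single_mul_single, add_comm]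

end Multinomial

section Endomorphisms

variable {R A : Type*} [CommRing R] [Ring A] [Algebra R A] (D : Module.End R A)
  (hD : ∀ x y, D (x * y) = D x * y + x * D y)
include hD

lemma iterate_ad_derivation_smul_mulRight (m : ℕ) (s : R) (c : A) :
    (fun Y : Module.End R A => D * Y - Y * D)^[m] (s • LinearMap.mulRight R c) =
      s • LinearMap.mulRight R ((⇑D)^[m] c) := by
  induction m generalizing c with
  | zero => rfl
  | succ m ih =>
    have hstep : D * (s • LinearMap.mulRight R c) - (s • LinearMap.mulRight R c) * D =
        s • LinearMap.mulRight R (D c) := by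
      ext x
      simp [hD]
    rw [iterate_succ_apply, hstep, ih, iterate_succ_apply]

lemma iterate_ad_mulRight_derivation (b : A) (k : ℕ) :
    (fun Y : Module.End R A => LinearMap.mulRight R b * Y - Y * LinearMap.mulRight R b)^[k + 1] D =
      (-1 : R) ^ (k + 1) • LinearMap.mulRight R (nestedComm (List.replicate k b ++ [D b])) := by
  induction k with
  | zero =>
    ext x
    simp [hD, nestedComm]
  | succ k ih =>
    rw [iterate_succ_apply', ih, List.replicate_succ, List.cons_append]
    ext x
    simp only [pow_succ, mul_neg, mul_one, Algebra.mul_smul_comm, neg_smul, Algebra.smul_mul_assoc,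
      sub_neg_eq_add, LinearMap.add_apply, LinearMap.neg_apply, LinearMap.smul_apply,
      Module.End.mul_apply, LinearMap.mulRight_apply, mul_assoc, neg_neg, mul_sub, smul_sub,
      nestedComm_cons b (by simp : List.replicate k b ++ [D b] ≠ [])]
    abel

end Endomorphisms

lemma List.ofFn_iterate_ite_eq_replicate_append {α : Type*} (f : α → α) (a : α) (k : ℕ) :
    List.ofFn (fun j : Fin (k + 1) => f^[if (j : ℕ) = k then 1 else 0] a) =
      List.replicate k a ++ [f a] := by
  rw [List.ofFn_succ', List.concat_eq_append]
  simp [(Fin.is_lt _).ne, List.ofFn_const]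

def minIndex (k : ℕ) : Fin k → ℕ := fun j => if (j : ℕ) = k - 1 then 2 else 1

lemma sum_minIndex {k : ℕ} (hk : 1 ≤ k) : ∑ j, minIndex k j = k + 1 := by
  obtain ⟨k, rfl⟩ : ∃ k', k = k' + 1 := ⟨k - 1, by omega⟩
  simp [minIndex, Fin.sum_univ_castSucc, (Fin.is_lt _).ne]

lemma minIndex_le_iff {k : ℕ} (w : Fin k → ℕ) :
    minIndex k ≤ w ↔ (∀ j : Fin k, (j : ℕ) < k - 1 → 1 ≤ w j) ∧
      (∀ j : Fin k, (j : ℕ) = k - 1 → 2 ≤ w j) := by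
  refine ⟨fun h => ⟨fun j hj => ?_, fun j hj => ?_⟩, fun ⟨h1, h2⟩ j => ?_⟩
  · simpa [minIndex, hj.ne] using h j
  · simpa [minIndex, hj] using h j
  · simp only [minIndex]
    split_ifs with hj
    exacts [h2 j hj, h1 j (by omega)]

lemma sum_piAntidiag_multinomial_smul_eq_sum_antidiagonalTuple {V : Type*} [AddCommMonoid V]
    [Module ℚ V] {k : ℕ} (n : ℕ) (hk : 1 ≤ k) (hkn : k + 1 ≤ n) (G : (Fin k → ℕ) → V) :
    ∑ v ∈ piAntidiag univ (n - k - 1), Nat.multinomial univ v • G (v + minIndex k) =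
      ∑ w ∈ (Nat.antidiagonalTuple k n).filter
          (fun w => (∀ j : Fin k, (j : ℕ) < k - 1 → 1 ≤ w j) ∧
            (∀ j : Fin k, (j : ℕ) = k - 1 → 2 ≤ w j)),
        (((n - k - 1).factorial : ℚ) /
            ((∏ j : Fin k, if (j : ℕ) = k - 1 then (w j - 2).factorial
              else (w j - 1).factorial : ℕ) : ℚ)) • G w := by
  refine sum_nbij' (· + minIndex k) (· - minIndex k) ?_ ?_ ?_ ?_ ?_
  · intro v hv
    rw [mem_piAntidiag] at hv
    rw [mem_filter, Nat.mem_antidiagonalTuple, ← minIndex_le_iff, Pi.add_def, sum_add_distrib,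
      hv.1, sum_minIndex hk]
    exact ⟨by omega, le_add_self⟩
  · intro w hw
    rw [mem_filter, Nat.mem_antidiagonalTuple, ← minIndex_le_iff] at hw
    rw [mem_piAntidiag, Pi.sub_def, sum_tsub_distrib _ fun j _ => hw.2 j, hw.1, sum_minIndex hk]
    exact ⟨by omega, by simp⟩
  · intro v _
    exact add_tsub_cancel_right v (minIndex k)
  · intro w hw
    exact tsub_add_cancel_of_le ((minIndex_le_iff w).2 (mem_filter.1 hw).2)
  · intro v hv
    rw [mem_piAntidiag] at hv
    rw [← Nat.cast_smul_eq_nsmul ℚ]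
    congr 1
    have hprod : (∏ j : Fin k, if (j : ℕ) = k - 1 then ((v + minIndex k) j - 2).factorial
        else ((v + minIndex k) j - 1).factorial) = ∏ j, (v j).factorial := by
      refine prod_congr rfl fun j _ => ?_
      split_ifs with hj <;> simp [minIndex, hj]
    rw [hprod, eq_div_iff (by positivity), ← hv.1, mul_comm]
    exact_mod_cast Nat.multinomial_spec univ v

theorem stmt11_general {A : Type*} [Ring A] [Algebra ℚ A] (D : Module.End ℚ A)
    (hD : ∀ x y : A, D (x * y) = D x * y + x * D y) (b : A)
    (n k : ℕ) (hk1 : 1 ≤ k) (hk2 : k ≤ n - 1) :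
    (fun Y : Module.End ℚ A => D * Y - Y * D)^[n - k - 1]
        ((fun Y : Module.End ℚ A =>
            LinearMap.mulRight ℚ b * Y - Y * LinearMap.mulRight ℚ b)^[k] D) =
      ((-1 : ℚ) ^ k) • LinearMap.mulRight ℚ
        (∑ v ∈ (Finset.Nat.antidiagonalTuple k n).filter
            (fun v => (∀ j : Fin k, (j : ℕ) < k - 1 → 1 ≤ v j) ∧
              (∀ j : Fin k, (j : ℕ) = k - 1 → 2 ≤ v j)),
          (((n - k - 1).factorial : ℚ) /
              ((∏ j : Fin k,
                if (j : ℕ) = k - 1 then (v j - 2).factorial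
                else (v j - 1).factorial : ℕ) : ℚ)) •
            nestedComm ((List.finRange k).map (fun j => (⇑D)^[v j - 1] b))) := by
  obtain ⟨k, rfl⟩ : ∃ k', k = k' + 1 := ⟨k - 1, by omega⟩
  have hexpand := iterate_apply_eq_sum_multinomial D.toAddMonoidHom
    (fun u : Fin (k + 1) → ℕ => nestedComm (List.ofFn fun j => (⇑D)^[u j] b))
    (map_nestedComm_ofFn_iterate D.toAddMonoidHom hD b) (n - (k + 1) - 1)
    (fun j => if (j : ℕ) = k then 1 else 0)
  simp only [LinearMap.toAddMonoidHom_coe] at hexpand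
  rw [iterate_ad_mulRight_derivation D hD, iterate_ad_derivation_smul_mulRight D hD,
    ← List.ofFn_iterate_ite_eq_replicate_append, hexpand,
    ← sum_piAntidiag_multinomial_smul_eq_sum_antidiagonalTuple n (by omega) (by omega)]
  refine congrArg _ (congrArg _ (sum_congr rfl fun v _ => ?_))
  rw [List.ofFn_eq_map]
  congr with j : 2
  congr 1
  simp only [Pi.add_apply, minIndex]
  split_ifs <;> omega

/-- Let `A` be an associative unital `ℚ`-algebra, `D` a derivation of
`A`, `b ∈ A` and `b_i := D^{i-1}(b)`.  Writing `R_f` for right multiplication by `f` and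
`ad_X(Y) = X∘Y − Y∘X` in `End(A)`, for all `n ≥ 2` and `1 ≤ k ≤ n−1` one has
`ad_D^{n−k−1}(ad_{R_b}^k(D)) = (−1)^k·R_c` with
`c = ∑ (n−k−1)!/((i_1−1)!⋯(i_{k−1}−1)!·(i_k−2)!)·[b_{i_1},[b_{i_2},[…,[b_{i_{k−1}},b_{i_k}]…]]]`,
the sum being over `k`-tuples `(i_1,…,i_k)` with `i_1+⋯+i_k = n`, `i_j ≥ 1` for `j < k`
and `i_k ≥ 2`. -/
theorem stmt11 {A : Type*} [Ring A] [Algebra ℚ A] (D : Module.End ℚ A)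
    (hD : ∀ x y : A, D (x * y) = D x * y + x * D y) (b : A)
    (n k : ℕ) (hn : 2 ≤ n) (hk1 : 1 ≤ k) (hk2 : k ≤ n - 1) :
    (fun Y : Module.End ℚ A => D * Y - Y * D)^[n - k - 1]
        ((fun Y : Module.End ℚ A =>
            LinearMap.mulRight ℚ b * Y - Y * LinearMap.mulRight ℚ b)^[k] D) =
      ((-1 : ℚ) ^ k) • LinearMap.mulRight ℚ
        (∑ v ∈ (Finset.Nat.antidiagonalTuple k n).filter
            (fun v => (∀ j : Fin k, (j : ℕ) < k - 1 → 1 ≤ v j) ∧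
              (∀ j : Fin k, (j : ℕ) = k - 1 → 2 ≤ v j)),
          (((n - k - 1).factorial : ℚ) /
              ((∏ j : Fin k,
                if (j : ℕ) = k - 1 then (v j - 2).factorial
                else (v j - 1).factorial : ℕ) : ℚ)) •
            nestedComm ((List.finRange k).map (fun j => (⇑D)^[v j - 1] b))) :=
  stmt11_general D hD b n k hk1 hk2
end
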